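/- Let R be a commutative ring of characteristic 0 with fraction field K, and let p be a prime such that a^p ≡ a (mod pR) for all a ∈ R (for example R = ℤ or R = ℤ_p). Let φ(x) ∈ x^p + p·x^{p+1}R[[x]] be a formal power series of the indicated form. Then the Böttcher coordinate satisfies f_φ(x) ∈ R[[x]] and its compositional inverse satisfies f_φ^{-1}(x) ∈ R[[x]]. -/

import Mathlib

/-!
Write `f ≡ T mod X ^ n` with `T` integral. In degree `n + p - 1`, the coefficient `fₙ` enters
`φ ∘ f` only through `f ^ p`, with weight `p`, so comparing `φ ∘ f = f ∘ X ^ p` with the same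
expressions for `T` shows that `p (fₙ - Tₙ)` is a coefficient `c` of `T ∘ X ^ p - φ ∘ T`.
Modulo `p` we have `φ ≡ X ^ p` and `a ^ p ≡ a`, hence `φ ∘ T ≡ T ^ p ≡ T ∘ X ^ p`, so `p ∣ c` and
`fₙ` is integral. For the inverse, `g` enters `f ∘ g = X` in degree `n` only through `gₙ`.
-/

/-- Composition `f(g(x))` of formal power series, intended for `g` with zero
constant coefficient. -/
noncomputable def PowerSeries.comp {K : Type*} [CommSemiring K] (f g : PowerSeries K) :
    PowerSeries K :=
  PowerSeries.mk fun n =>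
    PowerSeries.coeff (R := K) n
      (∑ k ∈ Finset.range (n + 1), PowerSeries.C (R := K) (PowerSeries.coeff (R := K) k f) * g ^ k)

open Finset

namespace PowerSeries

section Comp

variable {R S : Type*} [CommSemiring R] [CommSemiring S]

theorem coeff_comp (F G : R⟦X⟧) (n : ℕ) :
    coeff n (F.comp G) = ∑ k ∈ range (n + 1), coeff k F * coeff n (G ^ k) := by
  simp only [PowerSeries.comp, coeff_mk, map_sum, coeff_C_mul]

theorem map_comp_eq (σ : R →+* S) (F G : R⟦X⟧) :
    (F.comp G).map σ = (F.map σ).comp (G.map σ) := by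
  ext n
  simp only [coeff_map, coeff_comp, map_sum, map_mul, ← map_pow]

theorem X_pow_comp {G : R⟦X⟧} (hG : constantCoeff G = 0) (p : ℕ) :
    (X ^ p : R⟦X⟧).comp G = G ^ p := by
  ext n
  simp only [coeff_comp, coeff_X_pow, ite_mul, one_mul, zero_mul, sum_ite_eq', mem_range]
  split_ifs with hpn
  · rfl
  · rw [eq_comm, ← X_pow_dvd_iff.mp (pow_dvd_pow_of_dvd (X_dvd_iff.mpr hG) p) n (by omega)]

end Comp

variable {A : Type*} [CommRing A]

theorem comp_X_pow {p : ℕ} (hp : p ≠ 0) (F : A⟦X⟧) :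
    F.comp (X ^ p) = expand p hp F := by
  ext n
  simp only [coeff_comp, ← pow_mul, coeff_X_pow, mul_ite, mul_one, mul_zero, coeff_expand]
  split_ifs with hpn
  · obtain ⟨m, rfl⟩ := hpn
    rw [sum_eq_single m, if_pos rfl, Nat.mul_div_cancel_left _ (Nat.pos_of_ne_zero hp)]
    · intro k _ hkm
      exact if_neg fun h => hkm (Nat.eq_of_mul_eq_mul_left (Nat.pos_of_ne_zero hp) h).symm
    · intro hm
      exact absurd (mem_range.mpr
        (Nat.lt_succ_of_le (Nat.le_mul_of_pos_left m (Nat.pos_of_ne_zero hp)))) hm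
  · exact sum_eq_zero fun k _ => if_neg fun h => hpn ⟨k, h⟩

theorem coeff_eq_of_X_pow_dvd_sub {F G : A⟦X⟧} {d m : ℕ} (h : X ^ d ∣ F - G) (hm : m < d) :
    coeff m F = coeff m G :=
  sub_eq_zero.mp (by rw [← map_sub]; exact X_pow_dvd_iff.mp h m hm)

theorem X_mul_pow_sub_X_mul_pow (u v : A⟦X⟧) (k : ℕ) :
    (X * u) ^ k - (X * v) ^ k =
      X ^ (k - 1) * (X * u - X * v) * ∑ i ∈ range k, u ^ i * v ^ (k - 1 - i) := by
  rw [← geom_sum₂_mul, mul_sum, sum_mul]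
  refine sum_congr rfl fun i hi => ?_
  have hik : i + (k - 1 - i) = k - 1 := by have := mem_range.mp hi; omega
  rw [show (X : A⟦X⟧) ^ (k - 1) = X ^ i * X ^ (k - 1 - i) by rw [← pow_add, hik]]
  ring

theorem X_pow_dvd_pow_sub_pow {F G : A⟦X⟧} {d : ℕ} (hF : X ∣ F) (hG : X ∣ G)
    (h : X ^ d ∣ F - G) (k : ℕ) : X ^ (d + (k - 1)) ∣ F ^ k - G ^ k := by
  obtain ⟨u, rfl⟩ := hF
  obtain ⟨v, rfl⟩ := hG
  rw [X_mul_pow_sub_X_mul_pow, pow_add, mul_comm (X ^ d)]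
  exact (mul_dvd_mul_left _ h).mul_right _

theorem coeff_pow_sub_pow_of_X_pow_dvd_sub {F G : A⟦X⟧} {n : ℕ} (hn : 2 ≤ n)
    (hF0 : coeff 0 F = 0) (hF1 : coeff 1 F = 1) (h : X ^ n ∣ F - G) (k : ℕ) :
    coeff (n + (k - 1)) (F ^ k - G ^ k) = k * coeff n (F - G) := by
  have hG1 : coeff 1 G = 1 := by rw [← coeff_eq_of_X_pow_dvd_sub h (by omega), hF1]
  obtain ⟨u, rfl⟩ : X ∣ F := X_dvd_iff.mpr (by rwa [← coeff_zero_eq_constantCoeff_apply])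
  obtain ⟨v, rfl⟩ : X ∣ G := X_dvd_iff.mpr (by
    rw [← coeff_zero_eq_constantCoeff_apply, ← coeff_eq_of_X_pow_dvd_sub h (by omega), hF0])
  obtain ⟨e, he⟩ := h
  have hu : constantCoeff u = 1 := by simpa using hF1
  have hv : constantCoeff v = 1 := by simpa using hG1
  rw [X_mul_pow_sub_X_mul_pow, he, show ∀ a b c : A⟦X⟧, a * (X ^ n * b) * c = X ^ n * a * (b * c) by
    intros; ring, ← pow_add]
  simp only [coeff_X_pow_mul', le_refl, if_true, Nat.sub_self, coeff_zero_eq_constantCoeff_apply,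
    map_mul, map_sum, map_pow, hu, hv, one_pow, mul_one, sum_const, card_range, nsmul_one]
  ring

theorem coeff_comp_sub_comp {ψ F G : A⟦X⟧} {p n : ℕ} (hp : 0 < p) (hψ : ∀ k < p, coeff k ψ = 0)
    (hψp : coeff p ψ = 1) (hn : 2 ≤ n) (hF0 : coeff 0 F = 0) (hF1 : coeff 1 F = 1)
    (h : X ^ n ∣ F - G) :
    coeff (n + (p - 1)) (ψ.comp F - ψ.comp G) = p * coeff n (F - G) := by
  have hXF : X ∣ F := X_dvd_iff.mpr (by rwa [← coeff_zero_eq_constantCoeff_apply])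
  have hXG : X ∣ G := by
    simpa using dvd_sub hXF ((dvd_pow_self X (by omega : n ≠ 0)).trans h)
  rw [map_sub, coeff_comp, coeff_comp, ← sum_sub_distrib, sum_eq_single p]
  · rw [hψp, one_mul, one_mul, ← map_sub, coeff_pow_sub_pow_of_X_pow_dvd_sub hn hF0 hF1 h]
  · intro k _ hkp
    rcases lt_or_gt_of_ne hkp with hk | hk
    · rw [hψ k hk, zero_mul, zero_mul, sub_self]
    · rw [← mul_sub, ← map_sub,
        X_pow_dvd_iff.mp (X_pow_dvd_pow_sub_pow hXF hXG h k) _ (by omega), mul_zero]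
  · exact fun hp => absurd (mem_range.mpr (by omega)) hp

theorem coeff_comp_X_pow_eq_of_X_pow_dvd_sub {F G : A⟦X⟧} {p n N : ℕ} (hp : p ≠ 0)
    (h : X ^ n ∣ F - G) (hN : N < p * n) :
    coeff N (F.comp (X ^ p)) = coeff N (G.comp (X ^ p)) := by
  rw [comp_X_pow hp, comp_X_pow hp, coeff_expand, coeff_expand]
  split_ifs
  · exact coeff_eq_of_X_pow_dvd_sub h (Nat.div_lt_of_lt_mul hN)
  · rfl

theorem pow_eq_expand_of_pow_eq_self {S : Type*} [CommRing S] {p : ℕ} (hp : p.Prime)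
    (hpS : (p : S) = 0) (hS : ∀ a : S, a ^ p = a) (G : S⟦X⟧) :
    G ^ p = expand p hp.ne_zero G := by
  nontriviality S
  have : CharP S p := (CharP.charP_iff_prime_eq_zero hp).mpr hpS
  have : ExpChar S p := ExpChar.prime hp
  rw [← MvPowerSeries.map_frobenius_expand p hp.ne_zero (f := G)]
  ext n
  exact hS _

theorem dvd_coeff_comp_X_pow_sub_comp {p : ℕ} (hp : p.Prime)
    (hFermat : ∀ a : A, (p : A) ∣ a ^ p - a) {φ T : A⟦X⟧}
    (hφ : ∀ k, (p : A) ∣ coeff k (φ - X ^ p)) (hT : constantCoeff T = 0) (N : ℕ) :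
    (p : A) ∣ coeff N (T.comp (X ^ p) - φ.comp T) := by
  set π := Ideal.Quotient.mk (Ideal.span {(p : A)})
  have hπ : ∀ a, π a = 0 ↔ (p : A) ∣ a := fun a =>
    Ideal.Quotient.eq_zero_iff_mem.trans Ideal.mem_span_singleton
  have hpπ : (p : A ⧸ Ideal.span {(p : A)}) = 0 := by rw [← map_natCast π, hπ]
  have hFrob : ∀ a : A ⧸ Ideal.span {(p : A)}, a ^ p = a := by
    intro a
    obtain ⟨b, rfl⟩ := Ideal.Quotient.mk_surjective a
    rw [← map_pow, ← sub_eq_zero, ← map_sub, hπ]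
    exact hFermat b
  have hφπ : φ.map π = X ^ p := by
    rw [← sub_eq_zero, ← map_X π, ← map_pow, ← map_sub]
    ext k
    rw [coeff_map, map_zero, hπ]
    exact hφ k
  have hTπ : constantCoeff (T.map π) = 0 := by
    rw [← coeff_zero_eq_constantCoeff_apply, coeff_map, coeff_zero_eq_constantCoeff_apply, hT,
      map_zero]
  rw [← hπ, ← coeff_map, map_sub, map_comp_eq, map_comp_eq, hφπ, X_pow_comp hTπ, map_pow, map_X,
    comp_X_pow hp.ne_zero, ← pow_eq_expand_of_pow_eq_self hp hpπ hFrob, sub_self, map_zero]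

section Integrality

variable {R K : Type*} [CommRing R] [CommRing K] (σ : R →+* K)

theorem exists_X_pow_dvd_sub_map {f : K⟦X⟧} {n : ℕ} (h : ∀ m < n, coeff m f ∈ σ.range) :
    ∃ T : R⟦X⟧, X ^ n ∣ f - T.map σ := by
  choose a ha using fun m : Fin n => h m m.2
  refine ⟨mk fun m => if hm : m < n then a ⟨m, hm⟩ else 0, X_pow_dvd_iff.mpr fun m hm => ?_⟩
  rw [map_sub, coeff_map, coeff_mk, dif_pos hm, ha, sub_self]

theorem coeff_mem_range_of_forall_X_pow_dvd_sub {f : K⟦X⟧} (hf0 : coeff 0 f = 0)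
    (hf1 : coeff 1 f = 1)
    (h : ∀ n, 2 ≤ n → ∀ T : R⟦X⟧, X ^ n ∣ f - T.map σ → coeff n f ∈ σ.range) (n : ℕ) :
    coeff n f ∈ σ.range := by
  induction n using Nat.strong_induction_on with
  | _ n ih =>
    match n with
    | 0 => exact ⟨0, by rw [map_zero, hf0]⟩
    | 1 => exact ⟨1, by rw [map_one, hf1]⟩
    | n + 2 =>
      obtain ⟨T, hT⟩ := exists_X_pow_dvd_sub_map σ ih
      exact h (n + 2) (by omega) T hT

theorem exists_map_eq_of_coeff_mem_range {f : K⟦X⟧} (h : ∀ n, coeff n f ∈ σ.range) :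
    ∃ F : R⟦X⟧, F.map σ = f := by
  choose a ha using h
  exact ⟨mk a, by ext n; rw [coeff_map, coeff_mk, ha]⟩

theorem coeff_inverse_mem_range {f g : K⟦X⟧} (hf : ∀ n, coeff n f ∈ σ.range)
    (hf0 : coeff 0 f = 0) (hf1 : coeff 1 f = 1) (hg0 : coeff 0 g = 0) (hg1 : coeff 1 g = 1)
    (hfg : f.comp g = X) (n : ℕ) : coeff n g ∈ σ.range := by
  obtain ⟨F, rfl⟩ := exists_map_eq_of_coeff_mem_range σ hf
  refine coeff_mem_range_of_forall_X_pow_dvd_sub σ hg0 hg1 (fun n hn T hT => ?_) n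
  have hdefect := coeff_comp_sub_comp one_pos (ψ := F.map σ)
    (fun k hk => by rwa [Nat.lt_one_iff.mp hk]) hf1 hn hg0 hg1 hT
  rw [hfg, ← map_comp_eq, ← map_X σ, ← map_sub, coeff_map, Nat.sub_self, add_zero, Nat.cast_one,
    one_mul] at hdefect
  exact ⟨coeff n T + coeff n (X - F.comp T), by rw [map_add, hdefect, map_sub, coeff_map]; ring⟩

end Integrality

section Bottcher

variable {R K : Type*} [CommRing R] [CharZero R] [CommRing K] [IsDomain K] {σ : R →+* K}
  {p : ℕ} {φ : R⟦X⟧} {f : K⟦X⟧}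

theorem coeff_bottcher_mem_range_of_X_pow_dvd_sub (hσ : Function.Injective σ) (hp : p.Prime)
    (hFermat : ∀ a : R, (p : R) ∣ a ^ p - a) (hφlow : ∀ k < p, coeff k φ = 0)
    (hφlead : coeff p φ = 1) (hφ : ∀ k, (p : R) ∣ coeff k (φ - X ^ p)) (hf0 : coeff 0 f = 0)
    (hf1 : coeff 1 f = 1) (hfB : (φ.map σ).comp f = f.comp (X ^ p)) {n : ℕ} (hn : 2 ≤ n)
    {T : R⟦X⟧} (hT : X ^ n ∣ f - T.map σ) : coeff n f ∈ σ.range := by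
  have hT0 : constantCoeff T = 0 := hσ <| by
    rw [map_zero, ← coeff_zero_eq_constantCoeff_apply, ← coeff_map,
      ← coeff_eq_of_X_pow_dvd_sub hT (by omega), hf0]
  have hN : n + (p - 1) < p * n := by
    have := hp.two_le
    have : n + p ≤ p * n := by nlinarith
    omega
  have hdefect : (p : K) * coeff n (f - T.map σ) =
      σ (coeff (n + (p - 1)) (T.comp (X ^ p) - φ.comp T)) := by
    rw [← coeff_comp_sub_comp hp.pos (ψ := φ.map σ)
      (fun k hk => by rw [coeff_map, hφlow k hk, map_zero]) (by rw [coeff_map, hφlead, map_one])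
      hn hf0 hf1 hT, ← coeff_map, map_sub, map_sub, map_sub, map_comp_eq, map_comp_eq, map_pow,
      map_X, hfB, coeff_comp_X_pow_eq_of_X_pow_dvd_sub hp.ne_zero hT hN]
  obtain ⟨r, hr⟩ := dvd_coeff_comp_X_pow_sub_comp hp hFermat hφ hT0 (n + (p - 1))
  have hp0 : (p : K) ≠ 0 := by
    rw [← map_natCast σ]
    exact (map_ne_zero_iff σ hσ).mpr (Nat.cast_ne_zero.mpr hp.ne_zero)
  refine ⟨coeff n T + r, ?_⟩
  rw [hr, map_mul, map_natCast] at hdefect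
  rw [map_add, ← mul_left_cancel₀ hp0 hdefect, map_sub, coeff_map]
  ring

theorem coeff_bottcher_mem_range (hσ : Function.Injective σ) (hp : p.Prime)
    (hFermat : ∀ a : R, (p : R) ∣ a ^ p - a) (hφlow : ∀ k < p, coeff k φ = 0)
    (hφlead : coeff p φ = 1) (hφdiv : ∀ k, p < k → (p : R) ∣ coeff k φ) (hf0 : coeff 0 f = 0)
    (hf1 : coeff 1 f = 1) (hfB : (φ.map σ).comp f = f.comp (X ^ p)) (n : ℕ) :
    coeff n f ∈ σ.range := by
  have hφ : ∀ k, (p : R) ∣ coeff k (φ - X ^ p) := by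
    intro k
    rw [map_sub, coeff_X_pow]
    rcases lt_trichotomy k p with hk | rfl | hk
    · rw [hφlow k hk, if_neg hk.ne, sub_zero]
      exact dvd_zero _
    · rw [hφlead, if_pos rfl, sub_self]
      exact dvd_zero _
    · rw [if_neg hk.ne', sub_zero]
      exact hφdiv k hk
  exact coeff_mem_range_of_forall_X_pow_dvd_sub σ hf0 hf1 (fun n hn T hT =>
    coeff_bottcher_mem_range_of_X_pow_dvd_sub hσ hp hFermat hφlow hφlead hφ hf0 hf1 hfB hn hT) n

end Bottcher

end PowerSeries

/-- If `a^p ≡ a (mod pR)` for all `a ∈ R` and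
`φ ∈ x^p + p·x^{p+1}R[[x]]`, then the Böttcher coordinate `f_φ` and its
compositional inverse have all coefficients in `R`. -/
theorem bottcher_integral_prime {R K : Type*} [CommRing R] [CharZero R]
    [Field K] [Algebra R K] [IsFractionRing R K]
    (p : ℕ) (hp : p.Prime)
    (hFermat : ∀ a : R, ∃ c : R, a ^ p = a + (p : R) * c)
    (φ : PowerSeries R) (hφlow : ∀ k < p, PowerSeries.coeff (R := R) k φ = 0)
    (hφlead : PowerSeries.coeff (R := R) p φ = 1)
    (hφdiv : ∀ k, p < k → ∃ c : R, PowerSeries.coeff (R := R) k φ = (p : R) * c)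
    (f : PowerSeries K) (hf0 : PowerSeries.coeff (R := K) 0 f = 0)
    (hf1 : PowerSeries.coeff (R := K) 1 f = 1)
    (hfB : (φ.map (algebraMap R K)).comp f = f.comp (PowerSeries.X ^ p))
    (g : PowerSeries K) (hg0 : PowerSeries.coeff (R := K) 0 g = 0)
    (hg1 : PowerSeries.coeff (R := K) 1 g = 1)
    (hginv : f.comp g = PowerSeries.X) :
    (∀ k, ∃ a : R, PowerSeries.coeff (R := K) k f = algebraMap R K a) ∧
      (∀ k, ∃ a : R, PowerSeries.coeff (R := K) k g = algebraMap R K a) := by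
  have hFermat' : ∀ a : R, (p : R) ∣ a ^ p - a := fun a =>
    (hFermat a).imp fun c hc => by rw [hc, add_sub_cancel_left]
  have hf := PowerSeries.coeff_bottcher_mem_range (IsFractionRing.injective R K) hp hFermat'
    hφlow hφlead hφdiv hf0 hf1 hfB
  have hg := PowerSeries.coeff_inverse_mem_range _ hf hf0 hf1 hg0 hg1 hginv
  exact ⟨fun k => (hf k).imp fun _ => Eq.symm, fun k => (hg k).imp fun _ => Eq.symm⟩
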